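/- arXiv:1707.00083 — 2 statements merged into one kernel-verified Lean document; each statement's English description precedes it below -/
import Mathlib

section
/- For any positive integer k and any real λ, if X is an Erlang(k,1) random variable (sum of k independent exponential(1) random variables), then P(X ≥ λk) ≤ exp(1 - λ). -/
/-!
Write `F_m(x) = e^{-x} ∑_{j<m} x^j / j!` (`erlangTail`) for the tail of Erlang(m,1). By induction
on the number of summands, `P(S ≥ x) ≤ F_m(x)` for `x > 0`. In the step from `S` to `S + W`, with
`W` exponential and independent of `S`, conditioning on `S` gives
`P(S + W ≥ x) ≤ e^{-x} E[e^{min(S⁺, x)}]`, and by the layer-cake formula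
`E[e^{min(S⁺, x)}] = 1 + ∫_0^x e^t P(S > t) dt ≤ 1 + ∫_0^x e^t F_m(t) dt = e^x F_{m+1}(x)`.
Finally `k^j ≤ e (k-1)^j` for `j < k` gives `F_k(λk) ≤ e^{-λk} · e · e^{λ(k-1)} = e^{1-λ}`.
-/

open MeasureTheory ProbabilityTheory Real Finset

open scoped Nat

noncomputable def erlangTail (m : ℕ) (x : ℝ) : ℝ :=
  exp (-x) * ∑ j ∈ range m, x ^ j / j !

lemma exp_mul_erlangTail (m : ℕ) (x : ℝ) :
    exp x * erlangTail m x = ∑ j ∈ range m, x ^ j / j ! := by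
  rw [erlangTail, ← mul_assoc, ← exp_add, add_neg_cancel, exp_zero, one_mul]

lemma erlangTail_nonneg (m : ℕ) {x : ℝ} (hx : 0 ≤ x) : 0 ≤ erlangTail m x := by
  unfold erlangTail; positivity

lemma one_add_integral_exp_mul_erlangTail (m : ℕ) (x : ℝ) :
    1 + ∫ t in 0..x, exp t * erlangTail m t = exp x * erlangTail (m + 1) x := by
  simp_rw [exp_mul_erlangTail]
  rw [intervalIntegral.integral_finsetSum fun j _ =>
    (by fun_prop : Continuous fun t : ℝ => t ^ j / j !).intervalIntegrable _ _, sum_range_succ']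
  simp [integral_pow, Nat.factorial_succ, add_comm, div_div, mul_comm]

lemma succ_pow_le_exp_one_mul_pow {n j : ℕ} (hj : j ≤ n) :
    ((n : ℝ) + 1) ^ j ≤ exp 1 * (n : ℝ) ^ j := by
  rcases Nat.eq_zero_or_pos n with rfl | hn
  · simp [Nat.le_zero.mp hj, one_le_exp zero_le_one]
  have hn' : (0 : ℝ) < n := by exact_mod_cast hn
  calc ((n : ℝ) + 1) ^ j = (1 + (n : ℝ)⁻¹) ^ j * (n : ℝ) ^ j := by
        rw [← mul_pow]; field_simp
    _ ≤ (1 + (n : ℝ)⁻¹) ^ n * (n : ℝ) ^ j := by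
        gcongr
        exact le_add_of_nonneg_right (by positivity)
    _ ≤ exp 1 * (n : ℝ) ^ j := by gcongr; exact one_add_inv_pow_le_exp

lemma erlangTail_mul_le_exp_one_sub {k : ℕ} (hk : 0 < k) {lam : ℝ} (hlam : 0 ≤ lam) :
    erlangTail k (lam * k) ≤ exp (1 - lam) := by
  obtain ⟨n, rfl⟩ := Nat.exists_eq_add_one.mpr hk
  have hterm : ∀ j ∈ range (n + 1), (lam * (n + 1 : ℕ)) ^ j / j ! ≤
      exp 1 * ((lam * n) ^ j / j !) := by
    intro j hj
    rw [mul_pow, mul_pow, ← mul_div_assoc, mul_left_comm]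
    gcongr
    exact_mod_cast succ_pow_le_exp_one_mul_pow (Nat.lt_succ_iff.mp (mem_range.mp hj))
  calc erlangTail (n + 1) (lam * (n + 1 : ℕ))
      ≤ exp (-(lam * (n + 1 : ℕ))) * (exp 1 * exp (lam * n)) := by
        rw [erlangTail]
        gcongr
        exact (sum_le_sum hterm).trans
          (by rw [← mul_sum]; gcongr; exact sum_le_exp_of_nonneg (by positivity) _)
    _ = exp (1 - lam) := by rw [← exp_add, ← exp_add]; push_cast; ring_nf

open Filter Topology Set

lemma measure_Ici_le_exp_neg {μ : Measure ℝ}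
    (hμ : ∀ x : ℝ, 0 ≤ x → μ (Ioi x) = ENNReal.ofReal (exp (-x))) {c : ℝ} (hc : 0 < c) :
    μ (Ici c) ≤ ENNReal.ofReal (exp (-c)) := by
  have hlim : Tendsto (fun c' : ℝ => ENNReal.ofReal (exp (-c'))) (𝓝[<] c)
      (𝓝 (ENNReal.ofReal (exp (-c)))) :=
    ((ENNReal.continuous_ofReal.comp (by fun_prop)).tendsto c).mono_left
      nhdsWithin_le_nhds
  refine ge_of_tendsto hlim ?_
  filter_upwards [Ioo_mem_nhdsLT hc] with c' hc'
  calc μ (Ici c) ≤ μ (Ioi c') := measure_mono (Ici_subset_Ioi.mpr hc'.2)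
    _ = ENNReal.ofReal (exp (-c')) := hμ c' hc'.1.le

lemma lintegral_exp_min_max_le {ν : Measure ℝ} [IsProbabilityMeasure ν] {m : ℕ}
    (hν : ∀ t > 0, ν (Ici t) ≤ ENNReal.ofReal (erlangTail m t)) {x : ℝ} (hx : 0 ≤ x) :
    ∫⁻ y, ENNReal.ofReal (exp (min (max y 0) x)) ∂ν ≤
      ENNReal.ofReal (exp x * erlangTail (m + 1) x) := by
  set f : ℝ → ℝ := fun y => min (max y 0) x
  have hf_nn : ∀ y, 0 ≤ f y := fun y => le_min (le_max_right _ _) hx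
  have hlayer := lintegral_comp_eq_lintegral_meas_lt_mul ν (f := f) (g := exp)
    (Eventually.of_forall hf_nn) (by fun_prop)
    (fun _ _ => continuous_exp.intervalIntegrable _ _)
    (Eventually.of_forall fun t => (exp_pos t).le)
  simp only [integral_exp, exp_zero] at hlayer
  have hsplit : ∀ y, ENNReal.ofReal (exp (f y)) = 1 + ENNReal.ofReal (exp (f y) - 1) := by
    intro y
    rw [← ENNReal.ofReal_one, ← ENNReal.ofReal_add zero_le_one
      (sub_nonneg.mpr (one_le_exp (hf_nn y))), add_sub_cancel]
  have hbound : ∀ t ∈ Ioi (0 : ℝ), ν {y | t < f y} * ENNReal.ofReal (exp t) ≤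
      (Iic x).indicator (fun t => ENNReal.ofReal (exp t * erlangTail m t)) t := by
    intro t ht
    rcases le_or_gt t x with htx | htx
    · rw [Set.indicator_of_mem (show t ∈ Iic x from htx), ENNReal.ofReal_mul (exp_pos t).le,
        mul_comm]
      gcongr
      refine (measure_mono fun y (hy : t < f y) => ?_).trans (hν t ht)
      exact ((lt_max_iff.mp (hy.trans_le (min_le_left _ _))).resolve_right
        (not_lt.mpr (le_of_lt ht))).le
    · have : {y | t < f y} = ∅ := eq_empty_of_forall_notMem fun y hy =>
        (not_lt.mpr (htx.le.trans' (min_le_right _ _))) hy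
      simp [this]
  have hint : ∫⁻ t in Ioc 0 x, ENNReal.ofReal (exp t * erlangTail m t) =
      ENNReal.ofReal (∫ t in 0..x, exp t * erlangTail m t) := by
    rw [intervalIntegral.integral_of_le hx]
    refine (ofReal_integral_eq_lintegral_ofReal ?_ ?_).symm
    · exact Continuous.integrableOn_Ioc (by simp_rw [exp_mul_erlangTail]; fun_prop)
    · exact ae_restrict_of_forall_mem measurableSet_Ioc fun t ht =>
        mul_nonneg (exp_pos t).le (erlangTail_nonneg m ht.1.le)
  calc ∫⁻ y, ENNReal.ofReal (exp (f y)) ∂ν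
      = 1 + ∫⁻ t in Ioi 0, ν {y | t < f y} * ENNReal.ofReal (exp t) := by
        simp_rw [hsplit]
        rw [lintegral_add_left measurable_const, lintegral_const, measure_univ, one_mul, hlayer]
    _ ≤ 1 + ∫⁻ t in Ioc 0 x, ENNReal.ofReal (exp t * erlangTail m t) := by
        refine add_le_add le_rfl ((setLIntegral_mono' measurableSet_Ioi hbound).trans_eq ?_)
        rw [setLIntegral_indicator measurableSet_Iic, inter_comm, Ioi_inter_Iic]
    _ = ENNReal.ofReal (exp x * erlangTail (m + 1) x) := by
        rw [hint, ← ENNReal.ofReal_one, ← ENNReal.ofReal_add zero_le_one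
          (intervalIntegral.integral_nonneg hx fun t ht =>
            mul_nonneg (exp_pos t).le (erlangTail_nonneg m ht.1)),
          one_add_integral_exp_mul_erlangTail]

lemma conv_Ici_eq_lintegral (ν μ : Measure ℝ) [SFinite μ] (x : ℝ) :
    (ν ∗ μ) (Ici x) = ∫⁻ y, μ (Ici (x - y)) ∂ν := by
  rw [Measure.conv, Measure.map_apply measurable_add measurableSet_Ici,
    Measure.prod_apply (measurable_add measurableSet_Ici)]
  congr! with y
  ext z
  simp [add_comm]

lemma conv_Ici_le_erlangTail_succ {ν μ : Measure ℝ} [IsProbabilityMeasure ν]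
    [IsProbabilityMeasure μ] {m : ℕ}
    (hν : ∀ t > 0, ν (Ici t) ≤ ENNReal.ofReal (erlangTail m t))
    (hμ : ∀ c > 0, μ (Ici c) ≤ ENNReal.ofReal (exp (-c))) {x : ℝ} (hx : 0 < x) :
    (ν ∗ μ) (Ici x) ≤ ENNReal.ofReal (erlangTail (m + 1) x) := by
  have hpoint : ∀ y, μ (Ici (x - y)) ≤
      ENNReal.ofReal (exp (-x)) * ENNReal.ofReal (exp (min (max y 0) x)) := by
    intro y
    rw [← ENNReal.ofReal_mul (exp_pos _).le, ← exp_add]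
    rcases lt_or_ge y x with hyx | hyx
    · refine (hμ _ (sub_pos.mpr hyx)).trans (ENNReal.ofReal_le_ofReal (exp_le_exp.mpr ?_))
      have := le_min (le_max_left y 0) hyx.le
      linarith
    · rw [min_eq_right (hyx.trans (le_max_left y 0)), neg_add_cancel, exp_zero,
        ENNReal.ofReal_one]
      exact prob_le_one
  calc (ν ∗ μ) (Ici x) = ∫⁻ y, μ (Ici (x - y)) ∂ν := conv_Ici_eq_lintegral ν μ x
    _ ≤ ∫⁻ y, ENNReal.ofReal (exp (-x)) * ENNReal.ofReal (exp (min (max y 0) x)) ∂ν :=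
        lintegral_mono hpoint
    _ ≤ ENNReal.ofReal (exp (-x)) * ENNReal.ofReal (exp x * erlangTail (m + 1) x) := by
        rw [lintegral_const_mul _ (by fun_prop)]
        gcongr
        exact lintegral_exp_min_max_le hν hx.le
    _ = ENNReal.ofReal (erlangTail (m + 1) x) := by
        rw [← ENNReal.ofReal_mul (exp_pos _).le, ← mul_assoc, ← exp_add, neg_add_cancel,
          exp_zero, one_mul]

lemma map_sum_Ici_le_erlangTail {Ω ι : Type*} [MeasurableSpace Ω] {P : Measure Ω}
    [IsProbabilityMeasure P] {Z : ι → Ω → ℝ} (hmeas : ∀ i, Measurable (Z i))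
    (hindep : iIndepFun Z P)
    (hZ : ∀ i, ∀ x : ℝ, 0 ≤ x → P {ω | x < Z i ω} = ENNReal.ofReal (exp (-x)))
    (s : Finset ι) {t : ℝ} (ht : 0 < t) :
    P.map (∑ i ∈ s, Z i) (Ici t) ≤ ENNReal.ofReal (erlangTail #s t) := by
  induction s using Finset.cons_induction generalizing t with
  | empty =>
    rw [sum_empty, Measure.map_apply measurable_zero measurableSet_Ici]
    simp [Pi.zero_def, erlangTail, not_le.mpr ht]
  | cons a s ha ih =>
    have hS : Measurable (∑ i ∈ s, Z i) := by fun_prop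
    have hZa : ∀ c > 0, P.map (Z a) (Ici c) ≤ ENNReal.ofReal (exp (-c)) :=
      fun c hc => measure_Ici_le_exp_neg (fun x hx => by
        rw [Measure.map_apply (hmeas a) measurableSet_Ioi]; exact hZ a x hx) hc
    have := Measure.isProbabilityMeasure_map (μ := P) hS.aemeasurable
    have := Measure.isProbabilityMeasure_map (μ := P) (hmeas a).aemeasurable
    rw [sum_cons, add_comm, card_cons,
      (hindep.indepFun_finsetSum_of_notMem hmeas ha).map_add_eq_map_conv_map hS (hmeas a)]
    exact conv_Ici_le_erlangTail_succ (fun t ht => ih ht) hZa ht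

/-- For an Erlang(k,1) random variable `X` (a sum of `k` i.i.d. exponential(1)
random variables) and any real `λ`, `P(X ≥ λ k) ≤ exp (1 - λ)`. -/
theorem stmt4 {Ω : Type*} [MeasurableSpace Ω] (P : Measure Ω) [IsProbabilityMeasure P]
    (k : ℕ) (hk : 0 < k) (Z : Fin k → Ω → ℝ)
    (hmeas : ∀ i, Measurable (Z i))
    (hindep : iIndepFun Z P)
    (hZ : ∀ i, ∀ x : ℝ, 0 ≤ x → P {ω | x < Z i ω} = ENNReal.ofReal (Real.exp (-x)))
    (lam : ℝ) :
    P {ω | lam * k ≤ ∑ i, Z i ω} ≤ ENNReal.ofReal (Real.exp (1 - lam)) := by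
  rcases le_or_gt lam 0 with hlam | hlam
  · exact prob_le_one.trans (ENNReal.one_le_ofReal.mpr (one_le_exp (by linarith)))
  have hS : Measurable (∑ i, Z i) := by fun_prop
  have hsum := map_sum_Ici_le_erlangTail hmeas hindep hZ univ (t := lam * k) (by positivity)
  rw [Measure.map_apply hS measurableSet_Ici, card_univ, Fintype.card_fin] at hsum
  calc P {ω | lam * k ≤ ∑ i, Z i ω} = P ((∑ i, Z i) ⁻¹' Ici (lam * k)) := by
        simp only [Set.preimage, Set.mem_Ici, Finset.sum_apply]
    _ ≤ ENNReal.ofReal (erlangTail k (lam * k)) := hsum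
    _ ≤ ENNReal.ofReal (exp (1 - lam)) :=
        ENNReal.ofReal_le_ofReal (erlangTail_mul_le_exp_one_sub hk hlam.le)
end

section
/- Let G be a simple n-vertex d-degenerate graph with maximum degree Δ. Then the number of walks of length L in G is at most 2n·2^L·(dΔ)^{L/2}. -/
open Finset SimpleGraph

/-- A graph is `d`-degenerate if every (induced) subgraph has a vertex of
degree at most `d`: every nonempty vertex subset `s` contains a vertex with
at most `d` neighbours inside `s`. -/
def Degenerate {V : Type*} [DecidableEq V] (G : SimpleGraph V) [DecidableRel G.Adj]
    (d : ℕ) : Prop :=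
  ∀ s : Finset V, s.Nonempty → ∃ v ∈ s, (s.filter (G.Adj v)).card ≤ d

/-!
Order the vertices by a degeneracy ordering `r`, so that every vertex has at most `d` neighbours
of higher rank, and sort the walks `v₀ … v_L` by their descent pattern
`p i = (r v_{i+1} < r v_i)`. Choosing the vertices of a walk with a fixed pattern backwards from
`v_L`, each descent step has at most `d` choices and any other step at most `Δ`; choosing them
forwards from `v₀`, the roles of `d` and `Δ` swap. So the number `N_p` of such walks satisfies
`N_p² ≤ n² (dΔ)^L`, and summing over the `2^L` patterns gives `n 2^L (dΔ)^{L/2}`.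
-/

section Sequences

variable {V : Type*} [Fintype V] [DecidableEq V]

theorem card_seq_le_of_castSucc_mem {L : ℕ} (N : Fin L → V → Finset V) (k : Fin L → ℕ)
    (hN : ∀ i v, #(N i v) ≤ k i) :
    #{f : Fin (L + 1) → V | ∀ i, f i.castSucc ∈ N i (f i.succ)} ≤ Fintype.card V * ∏ i, k i := by
  induction L with
  | zero => simp
  | succ L ih =>
    set tails : Finset (Fin (L + 1) → V) := {g | ∀ i : Fin L, g i.castSucc ∈ N i.succ (g i.succ)}
    have hsub : ({f | ∀ i, f i.castSucc ∈ N i (f i.succ)} : Finset (Fin (L + 1 + 1) → V)) ⊆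
        tails.biUnion fun g => (N 0 (g 0)).image (Fin.cons · g : V → Fin (L + 1 + 1) → V) := by
      intro f hf
      simp only [mem_filter, mem_univ, true_and] at hf
      simp only [tails, mem_biUnion, mem_image, mem_filter, mem_univ, true_and]
      refine ⟨Fin.tail f, fun i => ?_, f 0, hf 0, Fin.cons_self_tail f⟩
      simpa [Fin.tail, ← Fin.succ_castSucc] using hf i.succ
    calc _ ≤ ∑ g ∈ tails, #((N 0 (g 0)).image (Fin.cons · g : V → Fin (L + 1 + 1) → V)) :=
          (card_le_card hsub).trans card_biUnion_le
      _ ≤ ∑ _g ∈ tails, k 0 := sum_le_sum fun g _ => card_image_le.trans (hN 0 _)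
      _ = #tails * k 0 := by rw [sum_const, smul_eq_mul]
      _ ≤ Fintype.card V * (∏ i : Fin L, k i.succ) * k 0 :=
          Nat.mul_le_mul_right _ (ih (fun i => N i.succ) (fun i => k i.succ) fun i => hN i.succ)
      _ = Fintype.card V * ∏ i, k i := by rw [Fin.prod_univ_succ]; ring

theorem card_seq_le_of_succ_mem {L : ℕ} (N : Fin L → V → Finset V) (k : Fin L → ℕ)
    (hN : ∀ i v, #(N i v) ≤ k i) :
    #{f : Fin (L + 1) → V | ∀ i, f i.succ ∈ N i (f i.castSucc)} ≤ Fintype.card V * ∏ i, k i := by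
  calc _ ≤ #{f : Fin (L + 1) → V | ∀ i : Fin L, f i.castSucc ∈ N i.rev (f i.succ)} := by
        refine card_le_card_of_injOn (· ∘ Fin.rev) (fun f hf => ?_)
          (Fin.rev_surjective.injective_comp_right.injOn)
        simp only [mem_coe, mem_filter, mem_univ, true_and] at hf ⊢
        intro i
        simpa [Fin.rev_castSucc, Fin.rev_succ] using hf i.rev
    _ ≤ Fintype.card V * ∏ i : Fin L, k i.rev :=
        card_seq_le_of_castSucc_mem (fun i => N i.rev) (fun i => k i.rev) fun i v => hN i.rev v
    _ = Fintype.card V * ∏ i, k i := by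
        rw [← Equiv.prod_comp Fin.revPerm k]; rfl

end Sequences

section DegeneracyOrder

variable {V : Type*} [DecidableEq V] {G : SimpleGraph V} [DecidableRel G.Adj]

theorem Degenerate.exists_rank_injOn {d : ℕ} (hG : Degenerate G d) (s : Finset V) :
    ∃ r : V → ℕ, Set.InjOn r s ∧ ∀ v ∈ s, #{u ∈ s | G.Adj v u ∧ r v < r u} ≤ d := by
  induction s using Finset.strongInduction with
  | H s ih =>
  obtain rfl | hs := s.eq_empty_or_nonempty
  · exact ⟨0, by simp, by simp⟩
  obtain ⟨v, hv, hvd⟩ := hG s hs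
  obtain ⟨r, hinj, hr⟩ := ih (s.erase v) (erase_ssubset hv)
  -- `v` gets the lowest rank, so it is no vertex's upper neighbour.
  refine ⟨fun u => if u = v then 0 else r u + 1, ?_, fun u hu => ?_⟩
  · intro a ha b hb hab
    dsimp only at hab
    split_ifs at hab with hav hbv hbv
    · exact hav.trans hbv.symm
    · exact hinj (mem_erase.2 ⟨hav, ha⟩) (mem_erase.2 ⟨hbv, hb⟩) (by omega)
  by_cases huv : u = v
  · subst huv
    refine (card_le_card fun w hw => ?_).trans hvd
    simp only [mem_filter] at hw ⊢
    exact ⟨hw.1, hw.2.1⟩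
  · refine (card_le_card fun w hw => ?_).trans (hr u (mem_erase.2 ⟨huv, hu⟩))
    simp only [mem_filter, mem_erase] at hw ⊢
    grind

variable [Fintype V]

theorem Degenerate.exists_injective_rank {d : ℕ} (hG : Degenerate G d) :
    ∃ r : V → ℕ, Function.Injective r ∧ ∀ v, #{u | G.Adj v u ∧ r v < r u} ≤ d := by
  obtain ⟨r, hinj, hr⟩ := hG.exists_rank_injOn univ
  exact ⟨r, by simpa using hinj, fun v => by simpa using hr v (mem_univ v)⟩

end DegeneracyOrder

section Walks

variable {V : Type*} [Fintype V] [DecidableEq V] (G : SimpleGraph V) [DecidableRel G.Adj]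

def walkSeqs (L : ℕ) : Finset (Fin (L + 1) → V) :=
  {f | ∀ i : Fin L, G.Adj (f i.castSucc) (f i.succ)}

theorem card_walks_le_card_walkSeqs (L : ℕ) :
    ∑ u, ∑ v, #(G.finsetWalkLength L u v) ≤ #(walkSeqs G L) := by
  simp_rw [← card_sigma]
  refine card_le_card_of_injOn (fun x i => x.2.2.getVert i) ?_ ?_
  · rintro ⟨u, v, w⟩ hw
    simp only [walkSeqs, mem_coe, mem_sigma, mem_univ, true_and, mem_finsetWalkLength_iff,
      mem_filter] at hw ⊢
    intro i
    simpa using w.adj_getVert_succ (i := i) (by omega)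
  · rintro ⟨u, v, w⟩ hw ⟨u', v', w'⟩ hw' h
    simp only [mem_coe, mem_sigma, mem_univ, true_and, mem_finsetWalkLength_iff] at hw hw'
    obtain rfl : u = u' := by simpa using congrFun h 0
    obtain rfl : v = v' := by
      have hlast := congrFun h (Fin.last L)
      simp only [Fin.val_last] at hlast
      rwa [← hw, w.getVert_length, hw, ← hw', w'.getVert_length] at hlast
    obtain rfl : w = w' := Walk.ext_support <|
      List.ext_getElem (by simp [hw, hw']) fun i hi _ => by
        simp only [Walk.support_getElem_eq_getVert]
        simpa using congrFun h ⟨i, by simp_all⟩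
    rfl

def descents (r : V → ℕ) {L : ℕ} (f : Fin (L + 1) → V) : Fin L → Bool :=
  fun i => decide (r (f i.succ) < r (f i.castSucc))

theorem sq_card_filter_descents_eq_le {r : V → ℕ} (hr_inj : Function.Injective r) {d Δ : ℕ}
    (hr : ∀ v, #{u | G.Adj v u ∧ r v < r u} ≤ d) (hΔ : ∀ v, G.degree v ≤ Δ) {L : ℕ}
    (p : Fin L → Bool) :
    #{f ∈ walkSeqs G L | descents r f = p} ^ 2 ≤ Fintype.card V ^ 2 * (d * Δ) ^ L := by
  set nbhd : Bool → V → Finset V := fun b v =>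
    if b then ({u | G.Adj v u ∧ r v < r u} : Finset V) else G.neighborFinset v
  have hcard (b : Bool) (v : V) : #(nbhd b v) ≤ if b then d else Δ := by
    cases b
    · simpa [nbhd] using hΔ v
    · exact hr v
  set F := {f ∈ walkSeqs G L | descents r f = p}
  have hback : #F ≤ Fintype.card V * ∏ i, if p i then d else Δ := by
    refine (card_le_card fun f hf => ?_).trans
      (card_seq_le_of_castSucc_mem (fun i => nbhd (p i)) _ fun i => hcard (p i))
    simp only [F, walkSeqs, descents, mem_filter, mem_univ, true_and, funext_iff] at hf ⊢
    intro i
    have hadj := (hf.1 i).symm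
    have hdesc : decide (r (f i.succ) < r (f i.castSucc)) = p i := hf.2 i
    cases hpi : p i
    · simpa [nbhd] using hadj
    · simp only [hpi, decide_eq_true_eq] at hdesc
      simpa [nbhd] using ⟨hadj, hdesc⟩
  have hfwd : #F ≤ Fintype.card V * ∏ i, if !p i then d else Δ := by
    refine (card_le_card fun f hf => ?_).trans
      (card_seq_le_of_succ_mem (fun i => nbhd (!p i)) _ fun i => hcard (!p i))
    simp only [F, walkSeqs, descents, mem_filter, mem_univ, true_and, funext_iff] at hf ⊢
    intro i
    have hadj := hf.1 i
    have hdesc : decide (r (f i.succ) < r (f i.castSucc)) = p i := hf.2 i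
    have hne : r (f i.castSucc) ≠ r (f i.succ) := hr_inj.ne hadj.ne
    cases hpi : p i
    · simp only [hpi, decide_eq_false_iff_not, not_lt] at hdesc
      simpa [nbhd] using ⟨hadj, lt_of_le_of_ne hdesc hne⟩
    · simpa [nbhd] using hadj
  calc #F ^ 2 = #F * #F := sq _
    _ ≤ (Fintype.card V * ∏ i, if p i then d else Δ) *
        (Fintype.card V * ∏ i, if !p i then d else Δ) := Nat.mul_le_mul hback hfwd
    _ = Fintype.card V ^ 2 * (d * Δ) ^ L := by
      rw [mul_mul_mul_comm, ← prod_mul_distrib, ← sq]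
      congr 1
      calc _ = ∏ _i : Fin L, d * Δ := prod_congr rfl fun i _ => by cases p i <;> simp [mul_comm]
        _ = (d * Δ) ^ L := by simp

end Walks

theorem cast_le_mul_rpow_half_of_sq_le {x n m L : ℕ} (h : x ^ 2 ≤ n ^ 2 * m ^ L) :
    (x : ℝ) ≤ n * (m : ℝ) ^ ((L : ℝ) / 2) := by
  refine le_of_pow_le_pow_left₀ two_ne_zero (by positivity) ?_
  rw [mul_pow, Real.rpow_div_two_eq_sqrt _ (by positivity), Real.rpow_natCast, ← pow_mul,
    mul_comm L 2, pow_mul, Real.sq_sqrt (by positivity)]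
  exact_mod_cast h

/-- An `n`-vertex `d`-degenerate graph with maximum degree `Δ` has at most
`2 n 2^L (dΔ)^{L/2}` walks of length `L`. -/
theorem stmt6 {V : Type*} [Fintype V] [DecidableEq V] (G : SimpleGraph V)
    [DecidableRel G.Adj] (n d Δ L : ℕ) (hn : Fintype.card V = n)
    (hdeg : Degenerate G d) (hΔ : ∀ v : V, G.degree v ≤ Δ) :
    ((∑ u : V, ∑ v : V, (G.finsetWalkLength L u v).card : ℕ) : ℝ)
      ≤ 2 * n * 2 ^ L * ((d * Δ : ℝ) ^ ((L : ℝ) / 2)) := by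
  obtain ⟨r, hr_inj, hr⟩ := hdeg.exists_injective_rank
  set X := (d * Δ : ℝ) ^ ((L : ℝ) / 2)
  have hfiber (p : Fin L → Bool) : (#{f ∈ walkSeqs G L | descents r f = p} : ℝ) ≤ n * X := by
    simpa [hn] using
      cast_le_mul_rpow_half_of_sq_le (sq_card_filter_descents_eq_le G hr_inj hr hΔ p)
  calc ((∑ u : V, ∑ v : V, (G.finsetWalkLength L u v).card : ℕ) : ℝ)
      ≤ #(walkSeqs G L) := by exact_mod_cast card_walks_le_card_walkSeqs G L
    _ = ∑ p : Fin L → Bool, (#{f ∈ walkSeqs G L | descents r f = p} : ℝ) := by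
      rw [card_eq_sum_card_fiberwise (f := descents r) (t := univ) (by simp)]
      push_cast
      rfl
    _ ≤ ∑ _p : Fin L → Bool, n * X := sum_le_sum fun p _ => hfiber p
    _ = 2 ^ L * (n * X) := by simp
    _ ≤ 2 * (2 ^ L * (n * X)) := le_mul_of_one_le_left (by positivity) one_le_two
    _ = 2 * n * 2 ^ L * X := by ring
end
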